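/- Define the normalized trapezoidal second-order structure-preserving scheme by 𝓐_un(ρ) := (I + ΔtJ + (Δt²/2)J²) · ρ · (I + ΔtJ + (Δt²/2)J²)ᴴ + (Δt/2) · (I + ΔtJ) · (L ρ Lᴴ) · (I + ΔtJ)ᴴ + (Δt/2) · L · ((I + ΔtJ) · ρ · (I + ΔtJ)ᴴ) · Lᴴ + (Δt²/2) · L (L ρ Lᴴ) Lᴴ and 𝓐(ρ) := 𝓐_un(ρ)/Tr(𝓐_un(ρ)). Then the following are equivalent: (i) for every density matrix ρ_0, Tr(σ_X · 𝓐^{∘k}(ρ_0)) → 0 and Tr(σ_Y · 𝓐^{∘k}(ρ_0)) → 0 as k → ∞; (ii) a·Δt ≠ 4 (that is, Re(z) ≠ 4). -/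

import Mathlib

/-!
Both `H` and `L` are multiples of `σ_Z`, so `J = diag(j, j̄)` with `j = -a/4 - ib/2` and
`L = diag(c, -c)` with `c² = a/2`. Sandwiching by diagonal matrices is Schur multiplication,
so `𝓐_un ρ = S ⊙ ρ` for a Hermitian `S` with constant diagonal `A > 0` and off-diagonal entry
`B`. Normalising by the trace divides by `A`: the iterates of `𝓐` keep the populations and
multiply the coherence `ρ₀₁` by `μ^k`, `μ = B / A`, and the `σ_X`, `σ_Y` expectations decay for
every state iff `|μ| < 1`.

With `n = 1 + Δt j` and `x = Δt c² = aΔt/2`, the second-order factor is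
`1 + Δt j + (Δt j)²/2 = (1 + n²)/2 =: m`, so `A = |m|² + x|n|² + x²/2` and
`B = m² - x n² + x²/2`. By the triangle inequality `|B| ≤ A`, with equality iff `-x n² ≥ 0`,
i.e. `Re n = 1 - aΔt/4 = 0`; then `m` is real as well and `B = A`.
-/

open Filter Complex Matrix Topology
open scoped ComplexOrder

section SchurMultiplier

variable {ι 𝕜 : Type*} [Fintype ι] [Field 𝕜]

lemma trace_hadamard_of_diag_eq {S : Matrix ι ι 𝕜} {A : 𝕜} (hS : ∀ i, S i i = A)
    (σ : Matrix ι ι 𝕜) : (S ⊙ σ).trace = A * σ.trace := by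
  simp [trace, hadamard_apply, hS, Finset.mul_sum]

lemma iterate_normalized_hadamard {S : Matrix ι ι 𝕜} {A : 𝕜} (hA : A ≠ 0)
    (hS : ∀ i, S i i = A) {ρ : Matrix ι ι 𝕜} (hρ : ρ.trace = 1) (k : ℕ) :
    (fun σ => (S ⊙ σ).trace⁻¹ • (S ⊙ σ))^[k] ρ = of (fun i j => (S i j / A) ^ k) ⊙ ρ := by
  induction k with
  | zero => ext; simp [hadamard_apply]
  | succ k ih =>
    have htr : (of (fun i j => (S i j / A) ^ k) ⊙ ρ).trace = 1 := by
      rw [trace_hadamard_of_diag_eq (A := 1) (fun i => by simp [hS, hA]), one_mul, hρ]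
    rw [Function.iterate_succ_apply', ih, trace_hadamard_of_diag_eq hS, htr, mul_one]
    ext i j
    simp only [Matrix.smul_apply, hadamard_apply, of_apply, smul_eq_mul, div_pow, pow_succ]
    field_simp

end SchurMultiplier

section Diagonal

variable {ι : Type*} [DecidableEq ι]

lemma one_add_smul_diagonal (Δt : ℝ) (d : ι → ℂ) :
    1 + Δt • diagonal d = diagonal fun i => 1 + Δt * d i := by
  ext i j
  by_cases h : i = j <;> simp [h, Complex.real_smul]

variable [Fintype ι]

lemma diagonal_mul_mul_conjTranspose_diagonal (p q : ι → ℂ) (ρ : Matrix ι ι ℂ) :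
    diagonal p * ρ * (diagonal q)ᴴ = of (fun i j => p i * star (q j)) ⊙ ρ := by
  ext i j
  simp [diagonal_conjTranspose, hadamard_apply]
  ring

lemma one_add_smul_add_smul_sq_diagonal (Δt : ℝ) (d : ι → ℂ) :
    1 + Δt • diagonal d + (Δt ^ 2 / 2) • diagonal d ^ 2
      = diagonal fun i => (1 + (1 + Δt * d i) ^ 2) / 2 := by
  ext i j
  by_cases h : i = j
  · subst h; simp [diagonal_pow, Complex.real_smul]; ring
  · simp [h, diagonal_pow]

end Diagonal

noncomputable def sp2TrUn {ι : Type*} [Fintype ι] [DecidableEq ι] (Δt : ℝ)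
    (J L ρ : Matrix ι ι ℂ) : Matrix ι ι ℂ :=
  (1 + Δt • J + (Δt ^ 2 / 2) • J ^ 2) * ρ * (1 + Δt • J + (Δt ^ 2 / 2) • J ^ 2)ᴴ
    + (Δt / 2) • ((1 + Δt • J) * (L * ρ * Lᴴ) * (1 + Δt • J)ᴴ)
    + (Δt / 2) • (L * ((1 + Δt • J) * ρ * (1 + Δt • J)ᴴ) * Lᴴ)
    + (Δt ^ 2 / 2) • (L * (L * ρ * Lᴴ) * Lᴴ)

noncomputable def sp2Tr {ι : Type*} [Fintype ι] [DecidableEq ι] (Δt : ℝ)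
    (J L ρ : Matrix ι ι ℂ) : Matrix ι ι ℂ :=
  (sp2TrUn Δt J L ρ).trace⁻¹ • sp2TrUn Δt J L ρ

noncomputable def sp2TrDiagGain (x : ℝ) (n : ℂ) : ℝ :=
  ‖(1 + n ^ 2) / 2‖ ^ 2 + x * ‖n‖ ^ 2 + x ^ 2 / 2

noncomputable def sp2TrOffDiagGain (x : ℝ) (n : ℂ) : ℂ :=
  ((1 + n ^ 2) / 2) ^ 2 - x * n ^ 2 + x ^ 2 / 2

noncomputable def sp2TrAmplification (x : ℝ) (n : ℂ) : ℂ :=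
  sp2TrOffDiagGain x n / sp2TrDiagGain x n

lemma sp2TrDiagGain_pos {x : ℝ} (hx : 0 < x) (n : ℂ) : 0 < sp2TrDiagGain x n := by
  unfold sp2TrDiagGain; positivity

lemma sp2TrUn_dephasing (Δt c : ℝ) (j : ℂ) (ρ : Matrix (Fin 2) (Fin 2) ℂ) :
    sp2TrUn Δt (diagonal ![j, star j]) (diagonal ![(c : ℂ), -c]) ρ
      = !![(sp2TrDiagGain (Δt * c ^ 2) (1 + Δt * j) : ℂ),
            sp2TrOffDiagGain (Δt * c ^ 2) (1 + Δt * j);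
          star (sp2TrOffDiagGain (Δt * c ^ 2) (1 + Δt * j)),
            sp2TrDiagGain (Δt * c ^ 2) (1 + Δt * j)] ⊙ ρ := by
  rw [sp2TrUn, one_add_smul_add_smul_sq_diagonal, one_add_smul_diagonal]
  simp only [diagonal_mul_mul_conjTranspose_diagonal]
  ext i k
  -- with `‖z‖ ^ 2 = z * conj z` every entry becomes a polynomial identity in `j`, `conj j`
  fin_cases i <;> fin_cases k <;>
    (simp only [sp2TrDiagGain, sp2TrOffDiagGain]; push_cast; simp only [← Complex.mul_conj']
     simp [hadamard_apply, map_ofNat]; ring)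

lemma iterate_sp2Tr_dephasing {Δt c : ℝ} (hx : 0 < Δt * c ^ 2) (j : ℂ)
    (ρ : Matrix (Fin 2) (Fin 2) ℂ) (hρ : ρ.trace = 1) (k : ℕ) :
    (sp2Tr Δt (diagonal ![j, star j]) (diagonal ![(c : ℂ), -c]))^[k] ρ
      = !![ρ 0 0, sp2TrAmplification (Δt * c ^ 2) (1 + Δt * j) ^ k * ρ 0 1;
          star (sp2TrAmplification (Δt * c ^ 2) (1 + Δt * j)) ^ k * ρ 1 0, ρ 1 1] := by
  set x := Δt * c ^ 2
  set n := 1 + Δt * j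
  set S : Matrix (Fin 2) (Fin 2) ℂ :=
    !![(sp2TrDiagGain x n : ℂ), sp2TrOffDiagGain x n;
      star (sp2TrOffDiagGain x n), sp2TrDiagGain x n]
  have hA : (sp2TrDiagGain x n : ℂ) ≠ 0 := ofReal_ne_zero.mpr (sp2TrDiagGain_pos hx n).ne'
  have hF : sp2Tr Δt (diagonal ![j, star j]) (diagonal ![(c : ℂ), -c])
      = fun σ => (S ⊙ σ).trace⁻¹ • (S ⊙ σ) :=
    funext fun σ => by rw [sp2Tr, sp2TrUn_dephasing]
  rw [hF, iterate_normalized_hadamard hA (fun i => by fin_cases i <;> rfl) hρ]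
  ext r s
  fin_cases r <;> fin_cases s <;> simp [S, hadamard_apply, sp2TrAmplification, hA]

lemma norm_ofReal_sub_ofReal_mul_sq_lt {D E : ℝ} (hD : 0 < D) (hE : 0 < E) {n : ℂ}
    (hn : n.re ≠ 0) : ‖(D : ℂ) - E * n ^ 2‖ < D + E * ‖n‖ ^ 2 := by
  have hsq : ‖(D : ℂ) - E * n ^ 2‖ ^ 2 < (D + E * ‖n‖ ^ 2) ^ 2 := by
    rw [Complex.sq_norm, Complex.sq_norm, normSq_apply, normSq_apply]
    simp only [sub_re, sub_im, ofReal_re, ofReal_im, mul_re, mul_im, sq]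
    nlinarith [mul_pos (mul_pos hD hE) (mul_self_pos.mpr hn)]
  exact lt_of_pow_lt_pow_left₀ 2 (by positivity) hsq

lemma sp2TrOffDiagGain_eq_of_re_eq_zero (x : ℝ) {n : ℂ} (hn : n.re = 0) :
    sp2TrOffDiagGain x n = sp2TrDiagGain x n := by
  obtain ⟨t, rfl⟩ : ∃ t : ℝ, n = t * I := ⟨n.im, by apply Complex.ext <;> simp [hn]⟩
  have hsq : ((t : ℂ) * I) ^ 2 = ((-t ^ 2 : ℝ) : ℂ) := by push_cast; rw [mul_pow, I_sq]; ring
  have hm : (1 + ((t : ℂ) * I) ^ 2) / 2 = (((1 - t ^ 2) / 2 : ℝ) : ℂ) := by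
    rw [hsq]; push_cast; ring
  unfold sp2TrOffDiagGain sp2TrDiagGain
  rw [hm, hsq, norm_real, norm_mul, norm_real, norm_I, Real.norm_eq_abs, Real.norm_eq_abs,
    sq_abs, mul_one, sq_abs]
  push_cast; ring

lemma norm_sp2TrOffDiagGain_lt_of_re_ne_zero {x : ℝ} (hx : 0 < x) {n : ℂ} (hn : n.re ≠ 0) :
    ‖sp2TrOffDiagGain x n‖ < sp2TrDiagGain x n :=
  calc ‖sp2TrOffDiagGain x n‖
      = ‖((1 + n ^ 2) / 2) ^ 2 + (((x ^ 2 / 2 : ℝ) : ℂ) - x * n ^ 2)‖ := by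
        congr 1; unfold sp2TrOffDiagGain; push_cast; ring
    _ ≤ ‖((1 + n ^ 2) / 2) ^ 2‖ + ‖((x ^ 2 / 2 : ℝ) : ℂ) - x * n ^ 2‖ := norm_add_le _ _
    _ < ‖(1 + n ^ 2) / 2‖ ^ 2 + (x ^ 2 / 2 + x * ‖n‖ ^ 2) := by
        rw [norm_pow]
        gcongr
        exact norm_ofReal_sub_ofReal_mul_sq_lt (by positivity) hx hn
    _ = sp2TrDiagGain x n := by unfold sp2TrDiagGain; ring

lemma norm_sp2TrAmplification_lt_one_iff {x : ℝ} (hx : 0 < x) (n : ℂ) :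
    ‖sp2TrAmplification x n‖ < 1 ↔ n.re ≠ 0 := by
  have hA := sp2TrDiagGain_pos hx n
  rw [sp2TrAmplification, norm_div, norm_real, Real.norm_eq_abs, abs_of_pos hA, div_lt_one hA]
  refine ⟨fun h hn => ?_, norm_sp2TrOffDiagGain_lt_of_re_ne_zero hx⟩
  rw [sp2TrOffDiagGain_eq_of_re_eq_zero x hn, norm_real, Real.norm_eq_abs, abs_of_pos hA] at h
  exact h.false

lemma trace_pauliX_mul (X : Matrix (Fin 2) (Fin 2) ℂ) :
    (!![0, 1; 1, 0] * X).trace = X 0 1 + X 1 0 := by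
  rw [X.eta_fin_two, mul_fin_two, trace_fin_two]; simp [add_comm]

lemma trace_pauliY_mul (X : Matrix (Fin 2) (Fin 2) ℂ) :
    (!![0, -I; I, 0] * X).trace = I * (X 0 1 - X 1 0) := by
  rw [X.eta_fin_two, mul_fin_two, trace_fin_two]; simp; ring

lemma tendsto_trace_pauli_mul_iff {X : ℕ → Matrix (Fin 2) (Fin 2) ℂ} :
    (Tendsto (fun k => (!![0, 1; 1, 0] * X k).trace) atTop (𝓝 0) ∧
        Tendsto (fun k => (!![0, -I; I, 0] * X k).trace) atTop (𝓝 0)) ↔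
      Tendsto (fun k => X k 0 1) atTop (𝓝 0) ∧ Tendsto (fun k => X k 1 0) atTop (𝓝 0) := by
  simp only [trace_pauliX_mul, trace_pauliY_mul]
  constructor
  · rintro ⟨hX, hY⟩
    have h01 := (hX.sub (hY.const_mul I)).div_const 2
    have h10 := (hX.add (hY.const_mul I)).div_const 2
    simp only [mul_zero, sub_zero, add_zero, zero_div] at h01 h10
    refine ⟨h01.congr fun k => ?_, h10.congr fun k => ?_⟩
    · linear_combination -(X k 0 1 - X k 1 0) / 2 * I_sq
    · linear_combination (X k 0 1 - X k 1 0) / 2 * I_sq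
  · rintro ⟨h01, h10⟩
    exact ⟨by simpa using h01.add h10, by simpa using (h01.sub h10).const_mul I⟩

lemma forall_tendsto_coherences_iff_norm_lt_one
    {F : Matrix (Fin 2) (Fin 2) ℂ → Matrix (Fin 2) (Fin 2) ℂ} {μ : ℂ}
    (hF : ∀ ρ : Matrix (Fin 2) (Fin 2) ℂ, ρ.trace = 1 → ∀ k,
      F^[k] ρ = !![ρ 0 0, μ ^ k * ρ 0 1; star μ ^ k * ρ 1 0, ρ 1 1]) :
    (∀ ρ : Matrix (Fin 2) (Fin 2) ℂ, ρ.PosSemidef → ρ.trace = 1 →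
        Tendsto (fun k => (F^[k] ρ) 0 1) atTop (𝓝 0) ∧
          Tendsto (fun k => (F^[k] ρ) 1 0) atTop (𝓝 0)) ↔ ‖μ‖ < 1 := by
  refine ⟨fun h => ?_, fun hμ ρ _ hρ => ?_⟩
  · -- the pure state `(3/5, 4/5)` has coherence `12/25`
    set ρ : Matrix (Fin 2) (Fin 2) ℂ := vecMulVec ![3 / 5, 4 / 5] (star ![3 / 5, 4 / 5])
    have hρ : ρ.trace = 1 := by
      rw [trace_fin_two]; simp [ρ]; norm_num
    have hcoh := (h ρ (posSemidef_vecMulVec_self_star _) hρ).1.mul_const (25 / 12 : ℂ)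
    rw [zero_mul] at hcoh
    refine tendsto_pow_atTop_nhds_zero_iff_norm_lt_one.mp (hcoh.congr fun k => ?_)
    rw [hF ρ hρ]; simp [ρ]; ring
  · have hμ' : ‖star μ‖ < 1 := by rwa [norm_star]
    simp only [hF ρ hρ, of_apply, cons_val', cons_val_zero, cons_val_one, empty_val',
      cons_val_fin_one]
    exact ⟨by simpa using (tendsto_pow_atTop_nhds_zero_of_norm_lt_one hμ).mul_const (ρ 0 1),
      by simpa using (tendsto_pow_atTop_nhds_zero_of_norm_lt_one hμ').mul_const (ρ 1 0)⟩

theorem abs_stability_SP2_TR_general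
    (a b Δt : ℝ) (ha : 0 < a) (hΔt : 0 < Δt)
    (σX σY σZ H L : Matrix (Fin 2) (Fin 2) ℂ)
    (hσX : σX = !![0, 1; 1, 0])
    (hσY : σY = !![0, -Complex.I; Complex.I, 0])
    (hσZ : σZ = !![1, 0; 0, -1])
    (hH : H = ((b / 2 : ℝ) : ℂ) • σZ)
    (hL : L = (Real.sqrt (a / 2) : ℂ) • σZ)
    (Heff J : Matrix (Fin 2) (Fin 2) ℂ)
    (hHeff : Heff = H - (Complex.I / 2) • (Lᴴ * L))
    (hJ : J = -(Complex.I • Heff))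
    (𝓐un 𝓐 : Matrix (Fin 2) (Fin 2) ℂ → Matrix (Fin 2) (Fin 2) ℂ)
    (h𝓐un : 𝓐un = fun ρ =>
      (1 + Δt • J + (Δt ^ 2 / 2) • J ^ 2) * ρ * (1 + Δt • J + (Δt ^ 2 / 2) • J ^ 2)ᴴ
        + (Δt / 2) • ((1 + Δt • J) * (L * ρ * Lᴴ) * (1 + Δt • J)ᴴ)
        + (Δt / 2) • (L * ((1 + Δt • J) * ρ * (1 + Δt • J)ᴴ) * Lᴴ)
        + (Δt ^ 2 / 2) • (L * (L * ρ * Lᴴ) * Lᴴ))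
    (h𝓐 : 𝓐 = fun ρ => ((𝓐un ρ).trace)⁻¹ • 𝓐un ρ) :
    (∀ ρ0 : Matrix (Fin 2) (Fin 2) ℂ, ρ0.PosSemidef → ρ0.trace = 1 →
        Tendsto (fun k => (σX * 𝓐^[k] ρ0).trace) atTop (nhds 0) ∧
        Tendsto (fun k => (σY * 𝓐^[k] ρ0).trace) atTop (nhds 0))
      ↔ a * Δt ≠ 4 := by
  set c := √(a / 2)
  have hc : (c : ℂ) ^ 2 = a / 2 := by norm_cast; exact Real.sq_sqrt (by positivity)
  set j : ℂ := -(a / 4) - b / 2 * I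
  have hL' : L = diagonal ![(c : ℂ), -c] := by
    rw [hL, hσZ]; ext r s; fin_cases r <;> fin_cases s <;> simp
  have hJ' : J = diagonal ![j, star j] := by
    rw [hJ, hHeff, hH, hL', hσZ]
    ext r s
    fin_cases r <;> fin_cases s <;> simp [j] <;>
      linear_combination (-1 / 2 : ℂ) * hc + ((c : ℂ) ^ 2 / 2) * I_sq
  have h𝓐' : 𝓐 = sp2Tr Δt (diagonal ![j, star j]) (diagonal ![(c : ℂ), -c]) := by
    rw [h𝓐, h𝓐un, ← hJ', ← hL']; rfl
  have hn : (1 + Δt * j).re = 1 - a * Δt / 4 := by simp [j]; ring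
  have hx : 0 < Δt * c ^ 2 := by positivity
  subst hσX hσY
  simp_rw [tendsto_trace_pauli_mul_iff]
  rw [h𝓐', forall_tendsto_coherences_iff_norm_lt_one (iterate_sp2Tr_dephasing hx j),
    norm_sp2TrAmplification_lt_one_iff hx, hn]
  exact not_congr ⟨fun h => by linarith, fun h => by linarith⟩

/-- Absolute stability of the normalized trapezoidal second-order structure-preserving
scheme (Theorem 9 of the paper): decay holds for every density matrix iff `Re(z) = aΔt ≠ 4`. -/
theorem abs_stability_SP2_TR
    (a b Δt : ℝ) (ha : 0 < a) (hΔt : 0 < Δt) (z : ℂ)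
    (hz : z = ((a : ℂ) + (b : ℂ) * Complex.I) * (Δt : ℂ))
    (σX σY σZ H L : Matrix (Fin 2) (Fin 2) ℂ)
    (hσX : σX = !![0, 1; 1, 0])
    (hσY : σY = !![0, -Complex.I; Complex.I, 0])
    (hσZ : σZ = !![1, 0; 0, -1])
    (hH : H = ((b / 2 : ℝ) : ℂ) • σZ)
    (hL : L = (Real.sqrt (a / 2) : ℂ) • σZ)
    (𝓛 : Matrix (Fin 2) (Fin 2) ℂ → Matrix (Fin 2) (Fin 2) ℂ)
    (h𝓛 : 𝓛 = fun ρ => -Complex.I • (H * ρ - ρ * H) + L * ρ * Lᴴ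
        - (1 / 2 : ℂ) • (Lᴴ * L * ρ + ρ * (Lᴴ * L)))
    (Heff J : Matrix (Fin 2) (Fin 2) ℂ)
    (hHeff : Heff = H - (Complex.I / 2) • (Lᴴ * L))
    (hJ : J = -(Complex.I • Heff))
    (𝓐un 𝓐 : Matrix (Fin 2) (Fin 2) ℂ → Matrix (Fin 2) (Fin 2) ℂ)
    (h𝓐un : 𝓐un = fun ρ =>
      (1 + Δt • J + (Δt ^ 2 / 2) • J ^ 2) * ρ * (1 + Δt • J + (Δt ^ 2 / 2) • J ^ 2)ᴴ
        + (Δt / 2) • ((1 + Δt • J) * (L * ρ * Lᴴ) * (1 + Δt • J)ᴴ)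
        + (Δt / 2) • (L * ((1 + Δt • J) * ρ * (1 + Δt • J)ᴴ) * Lᴴ)
        + (Δt ^ 2 / 2) • (L * (L * ρ * Lᴴ) * Lᴴ))
    (h𝓐 : 𝓐 = fun ρ => ((𝓐un ρ).trace)⁻¹ • 𝓐un ρ) :
    (∀ ρ0 : Matrix (Fin 2) (Fin 2) ℂ, ρ0.PosSemidef → ρ0.trace = 1 →
        Tendsto (fun k => (σX * 𝓐^[k] ρ0).trace) atTop (nhds 0) ∧
        Tendsto (fun k => (σY * 𝓐^[k] ρ0).trace) atTop (nhds 0))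
      ↔ a * Δt ≠ 4 :=
  abs_stability_SP2_TR_general a b Δt ha hΔt σX σY σZ H L hσX hσY hσZ hH hL Heff J hHeff hJ 𝓐un 𝓐
    h𝓐un h𝓐
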